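/- Let k ≥ 1 be an integer, h ≠ 0 a real number, and t₀ ∈ ℝ. For every real polynomial p of degree at most k, p′(t₀) = (1/h)·∑_{i=0}^k β_i^k p(t₀ + i²·h), where β_0^k = −∑_{j=1}^k 1/j² and β_i^k = (−1)^{k−1}·(k!)² / (i² · ∏_{0≤j≤k, j≠i} (i² − j²)) for 1 ≤ i ≤ k. -/

import Mathlib

/-- The coefficients `β_i^k` of the non-equidistant derivative approximation:
`β_0^k = -∑_{j=1}^k 1/j²` and
`β_i^k = (-1)^(k-1)·(k!)² / (i² · ∏_{0≤j≤k, j≠i} (i² − j²))` for `1 ≤ i ≤ k`. -/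
noncomputable def betaCoef (k i : ℕ) : ℝ :=
  if i = 0 then -(∑ j ∈ Finset.Icc 1 k, (1 : ℝ) / (j : ℝ) ^ 2)
  else (-1) ^ (k - 1) * ((Nat.factorial k : ℝ)) ^ 2 /
    ((i : ℝ) ^ 2 * ∏ j ∈ (Finset.range (k + 1)).erase i, ((i : ℝ) ^ 2 - (j : ℝ) ^ 2))

/-!
A polynomial of degree at most `k` coincides with its Lagrange interpolant at the `k + 1` nodes
`t_j = t₀ + j² h`, so `p'(t₀) = ∑ᵢ p(tᵢ) Lᵢ'(t₀)`. Because `t₀ = t_0` is itself a node, `Lᵢ'(t₀)`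
has a closed form: for `i ≠ 0` the basis polynomial `Lᵢ` vanishes at `t₀`, so only its factor
`X - t₀` gets differentiated; for `i = 0` we have `L₀(t₀) = 1` and the logarithmic derivative gives
`∑_{j ≠ 0} 1 / (t₀ - t_j)`. Since `tᵢ - t_j = (i² - j²) h`, both come out as `β_i^k / h`.
-/

open Polynomial Finset

namespace Lagrange

variable {F ι : Type*} [Field F] [DecidableEq ι] {s : Finset ι} {v : ι → F} {i r : ι}

theorem derivative_basisDivisor (x y : F) : derivative (basisDivisor x y) = C (x - y)⁻¹ := by
  simp [basisDivisor]

theorem eval_derivative_basis_of_ne (hr : r ∈ s) (hir : i ≠ r) :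
    (derivative (Lagrange.basis s v i)).eval (v r)
      = (v i - v r)⁻¹ * ∏ j ∈ (s.erase i).erase r, (v r - v j) / (v i - v j) := by
  rw [Lagrange.basis, ← mul_prod_erase _ _ (mem_erase.2 ⟨hir.symm, hr⟩), derivative_mul,
    eval_add, eval_mul, eval_mul, eval_basisDivisor_right, zero_mul, add_zero,
    derivative_basisDivisor, eval_C, eval_prod]
  congr 1
  refine prod_congr rfl fun j _ => ?_
  simp [basisDivisor, div_eq_inv_mul]

theorem eval_derivative_basis_self (hvs : Set.InjOn v s) (hi : i ∈ s) :
    (derivative (Lagrange.basis s v i)).eval (v i) = ∑ j ∈ s.erase i, (v i - v j)⁻¹ := by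
  rw [Lagrange.basis, derivative_prod_finset, eval_finsetSum]
  refine sum_congr rfl fun j _ => ?_
  rw [eval_mul, eval_prod, prod_eq_one, one_mul, derivative_basisDivisor, eval_C]
  intro l hl
  have hli : l ∈ s ∧ l ≠ i := by simp_all
  exact eval_basisDivisor_left_of_ne fun h => hli.2 (hvs hli.1 hi h.symm)

theorem eval_derivative_eq_sum (hvs : Set.InjOn v s) {P : F[X]} (hP : P.degree < #s) (x : F) :
    (derivative P).eval x
      = ∑ i ∈ s, P.eval (v i) * (derivative (Lagrange.basis s v i)).eval x := by
  conv_lhs => rw [eq_interpolate hvs hP]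
  simp [interpolate_apply, eval_finsetSum]

end Lagrange

def squareNodes (t₀ h : ℝ) (j : ℕ) : ℝ := t₀ + (j : ℝ) ^ 2 * h

section squareNodes

variable {t₀ h : ℝ}

theorem squareNodes_zero : squareNodes t₀ h 0 = t₀ := by simp [squareNodes]

theorem squareNodes_sub (i j : ℕ) :
    squareNodes t₀ h i - squareNodes t₀ h j = ((i : ℝ) ^ 2 - (j : ℝ) ^ 2) * h := by
  simp only [squareNodes]; ring

theorem squareNodes_injective (hh : h ≠ 0) : Function.Injective (squareNodes t₀ h) := by
  intro i j hij
  have hsq : (i : ℝ) ^ 2 = (j : ℝ) ^ 2 := by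
    simpa [squareNodes, hh] using hij
  exact_mod_cast (sq_eq_sq₀ (Nat.cast_nonneg i) (Nat.cast_nonneg j)).1 hsq

theorem range_succ_erase_zero (k : ℕ) : (range (k + 1)).erase 0 = Icc 1 k := by
  ext j; simp only [mem_erase, mem_range, mem_Icc]; omega

theorem eval_derivative_basis_squareNodes_zero (hh : h ≠ 0) (k : ℕ) :
    (derivative (Lagrange.basis (range (k + 1)) (squareNodes t₀ h) 0)).eval t₀
      = betaCoef k 0 / h := by
  nth_rw 1 [← squareNodes_zero (t₀ := t₀) (h := h)]
  rw [Lagrange.eval_derivative_basis_self (squareNodes_injective hh).injOn (by simp),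
    range_succ_erase_zero, betaCoef, if_pos rfl, neg_div, sum_div, ← sum_neg_distrib]
  refine sum_congr rfl fun j _ => ?_
  rw [squareNodes_sub]
  field_simp
  ring

theorem sq_mul_prod_Icc_erase_sq {k i : ℕ} (hi : i ∈ Icc 1 k) :
    (i : ℝ) ^ 2 * ∏ j ∈ (Icc 1 k).erase i, (j : ℝ) ^ 2 = (k.factorial : ℝ) ^ 2 := by
  rw [mul_prod_erase _ (fun j : ℕ => (j : ℝ) ^ 2) hi, prod_pow, ← Nat.cast_prod,
    show Icc 1 k = Ico 1 (k + 1) from rfl, prod_Ico_id_eq_factorial]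

theorem eval_derivative_basis_squareNodes_of_ne_zero (hh : h ≠ 0) {k i : ℕ}
    (hi : i ∈ range (k + 1)) (hi0 : i ≠ 0) :
    (derivative (Lagrange.basis (range (k + 1)) (squareNodes t₀ h) i)).eval t₀
      = betaCoef k i / h := by
  have hT : ((range (k + 1)).erase i).erase 0 = (Icc 1 k).erase i := by
    rw [erase_right_comm, range_succ_erase_zero]
  have hiT : i ∈ Icc 1 k := by rw [← range_succ_erase_zero]; exact mem_erase.2 ⟨hi0, hi⟩
  have hcard : #((Icc 1 k).erase i) = k - 1 := by
    rw [card_erase_of_mem hiT, Nat.card_Icc, Nat.add_sub_cancel]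
  have h0 : 0 ∈ (range (k + 1)).erase i := mem_erase.2 ⟨Ne.symm hi0, by simp⟩
  have hden : ∏ j ∈ (range (k + 1)).erase i, ((i : ℝ) ^ 2 - (j : ℝ) ^ 2)
      = (i : ℝ) ^ 2 * ∏ j ∈ (Icc 1 k).erase i, ((i : ℝ) ^ 2 - (j : ℝ) ^ 2) := by
    rw [← mul_prod_erase _ _ h0, hT, Nat.cast_zero, zero_pow two_ne_zero, sub_zero]
  have hnum : ∏ j ∈ (Icc 1 k).erase i, (0 - (j : ℝ) ^ 2)
      = (-1) ^ (k - 1) * ∏ j ∈ (Icc 1 k).erase i, (j : ℝ) ^ 2 := by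
    simp only [zero_sub, neg_eq_neg_one_mul (_ ^ 2), prod_mul_distrib, prod_const, hcard]
  nth_rw 1 [← squareNodes_zero (t₀ := t₀) (h := h)]
  rw [Lagrange.eval_derivative_basis_of_ne (by simp) hi0, hT]
  simp only [squareNodes_sub, mul_div_mul_right _ _ hh]
  rw [prod_div_distrib, betaCoef, if_neg hi0, hden, ← sq_mul_prod_Icc_erase_sq hiT]
  simp only [Nat.cast_zero, zero_pow two_ne_zero, sub_zero, hnum]
  field_simp

theorem eval_derivative_basis_squareNodes (hh : h ≠ 0) {k i : ℕ} (hi : i ∈ range (k + 1)) :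
    (derivative (Lagrange.basis (range (k + 1)) (squareNodes t₀ h) i)).eval t₀
      = betaCoef k i / h := by
  rcases eq_or_ne i 0 with rfl | hi0
  · exact eval_derivative_basis_squareNodes_zero hh k
  · exact eval_derivative_basis_squareNodes_of_ne_zero hh hi hi0

end squareNodes

theorem deriv_eq_nonequidistant_combination_general (k : ℕ) (h : ℝ) (hh : h ≠ 0)
    (t₀ : ℝ) (p : Polynomial ℝ) (hp : p.degree ≤ (k : ℕ)) :
    (Polynomial.derivative p).eval t₀
      = (1 / h) * ∑ i ∈ Finset.range (k + 1),
          betaCoef k i * p.eval (t₀ + ((i : ℝ) ^ 2) * h) := by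
  have hdeg : p.degree < #(range (k + 1)) := by
    rw [card_range]
    exact hp.trans_lt (WithBot.coe_lt_coe.2 k.lt_succ_self)
  rw [Lagrange.eval_derivative_eq_sum (squareNodes_injective hh).injOn hdeg, mul_sum]
  refine sum_congr rfl fun i hi => ?_
  rw [eval_derivative_basis_squareNodes hh hi, squareNodes]
  ring

/-- For every real polynomial `p` of degree at most `k`,
`p′(t₀) = (1/h)·∑_{i=0}^k β_i^k p(t₀ + i²·h)`. -/
theorem deriv_eq_nonequidistant_combination (k : ℕ) (hk : 1 ≤ k) (h : ℝ) (hh : h ≠ 0)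
    (t₀ : ℝ) (p : Polynomial ℝ) (hp : p.degree ≤ (k : ℕ)) :
    (Polynomial.derivative p).eval t₀
      = (1 / h) * ∑ i ∈ Finset.range (k + 1),
          betaCoef k i * p.eval (t₀ + ((i : ℝ) ^ 2) * h) :=
  deriv_eq_nonequidistant_combination_general k h hh t₀ p hp
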